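/- arXiv:2211.02706 — 3 statements merged into one kernel-verified Lean document; each statement's English description precedes it below -/
import Mathlib

section
/- Let (P_n) be a t-periodic sub-Markovian semigroup with cyclic classes A_0,...,A_{t-1}, and let Q_n := P_{nt} restricted to A_0. If ν_QS is a QSD for P with absorption rate θ > 0, then the normalized restriction ν := ν_QS(· ∩ A_0)/ν_QS(A_0) is a QSD for Q with absorption rate θ^t. -/
/-! Under `κ`, the mass of `ν` on the cyclic class `A i` lands in `A (i + 1)`, and nothing else
reaches `A (i + 1)`. So the QSD equation `ν.bind κ = c • ν`, evaluated inside `A (i + 1)`, says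
that `κ` maps `ν|A i` to `c • ν|A (i + 1)`; going once around the period `t` brings `ν|A 0` back
to `c ^ t • ν|A 0`. -/

open MeasureTheory ProbabilityTheory

noncomputable def iterK {E : Type*} [MeasurableSpace E] (κ : Kernel E E) :
    ℕ → Kernel E E
  | 0 => Kernel.id
  | n + 1 => Kernel.comp κ (iterK κ n)

open scoped ENNReal

section

variable {E : Type*} [MeasurableSpace E] {κ : Kernel E E}

lemma bind_iterK_succ (μ : Measure E) (n : ℕ) :
    μ.bind (iterK κ (n + 1)) = (μ.bind (iterK κ n)).bind κ :=
  Measure.comp_assoc.symm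

lemma bind_restrict_eq_smul_restrict {ν : Measure E} {c : ℝ≥0∞} (hν : ν.bind κ = c • ν)
    {A B : Set E} (hA : MeasurableSet A) (hB : MeasurableSet B)
    (hκ : ∀ x s, κ x (s ∩ B) = A.indicator (fun y => κ y s) x) :
    (ν.restrict A).bind κ = c • ν.restrict B := by
  ext s hs
  calc (ν.restrict A).bind κ s = ∫⁻ x, A.indicator (fun y => κ y s) x ∂ν := by
        rw [Measure.bind_apply hs κ.aemeasurable, lintegral_indicator hA]
    _ = ν.bind κ (s ∩ B) := by
        simp_rw [← hκ, Measure.bind_apply (hs.inter hB) κ.aemeasurable]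
    _ = (c • ν.restrict B) s := by
        rw [hν, Measure.smul_apply, Measure.smul_apply, Measure.restrict_apply hs]

variable {t : ℕ} [NeZero t]

lemma kernel_inter_succ_eq_indicator {A : Fin t → Set E} (hAcover : (⋃ i, A i) = Set.univ)
    (hper : ∀ i, ∀ x ∈ A i, ∀ j, j ≠ i + 1 → κ x (A j) = 0) (i : Fin t) (x : E) (s : Set E) :
    κ x (s ∩ A (i + 1)) = (A i).indicator (fun y => κ y s) x := by
  have hmem : ∀ y, ∃ j, y ∈ A j := fun y => Set.mem_iUnion.mp (hAcover ▸ Set.mem_univ y)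
  by_cases hx : x ∈ A i
  · rw [Set.indicator_of_mem hx]
    refine measure_inter_conull (measure_mono_null (t := ⋃ j, ⋃ (_ : j ≠ i + 1), A j) ?_ ?_)
    · intro y hy
      obtain ⟨j, hj⟩ := hmem y
      exact Set.mem_biUnion (x := j) (fun hji => hy (hji ▸ hj)) hj
    · exact measure_iUnion_null fun j => measure_iUnion_null fun hj => hper i x hx j hj
  · rw [Set.indicator_of_notMem hx]
    obtain ⟨j, hj⟩ := hmem x
    have hji : j ≠ i := fun h => hx (h ▸ hj)
    exact measure_mono_null Set.inter_subset_right
      (hper j x hj (i + 1) fun h => hji (add_right_cancel h).symm)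

open Fin.NatCast in
lemma bind_iterK_of_bind_eq_smul_succ {μ : Fin t → Measure E} {c : ℝ≥0∞}
    (hμ : ∀ i, (μ i).bind κ = c • μ (i + 1)) (n : ℕ) (i : Fin t) :
    (μ i).bind (iterK κ n) = c ^ n • μ (i + n) := by
  induction n with
  | zero => simp [iterK]
  | succ n ih =>
    rw [bind_iterK_succ, ih, Measure.bind_smul, hμ, smul_smul, ← pow_succ, Nat.cast_succ,
      add_assoc]

end

theorem stmt1_general
    {E : Type*} [MeasurableSpace E] (κ : Kernel E E) {t : ℕ} [NeZero t]
    (A : Fin t → Set E)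
    (hAmeas : ∀ i, MeasurableSet (A i))
    (hAcover : (⋃ i, A i) = Set.univ)
    (hper : ∀ i : Fin t, ∀ x ∈ A i,
      (∀ j : Fin t, j ≠ i + 1 → κ x (A j) = 0) ∧ κ x (A (i + 1)) = κ x Set.univ)
    (ν : Measure E) {θ : ℝ} (hθ : 0 < θ)
    (hQSD : Measure.bind ν (fun x => κ x) = ENNReal.ofReal θ • ν) :
    Measure.bind ((ν (A 0))⁻¹ • ν.restrict (A 0)) (fun x => iterK κ t x)
      = ENNReal.ofReal (θ ^ t) • ((ν (A 0))⁻¹ • ν.restrict (A 0)) := by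
  have hstep : ∀ i, (ν.restrict (A i)).bind κ = ENNReal.ofReal θ • ν.restrict (A (i + 1)) :=
    fun i => bind_restrict_eq_smul_restrict hQSD (hAmeas i) (hAmeas (i + 1))
      (kernel_inter_succ_eq_indicator hAcover (fun i x hx => (hper i x hx).1) i)
  rw [Measure.bind_smul, bind_iterK_of_bind_eq_smul_succ hstep, Fin.natCast_self, add_zero,
    ENNReal.ofReal_pow hθ.le, smul_comm]

theorem stmt1
    {E : Type*} [MeasurableSpace E] (κ : Kernel E E) {t : ℕ} [NeZero t]
    (A : Fin t → Set E)
    (hAmeas : ∀ i, MeasurableSet (A i))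
    (hAdisj : ∀ i j, i ≠ j → Disjoint (A i) (A j))
    (hAcover : (⋃ i, A i) = Set.univ)
    (hsub : ∀ x, κ x Set.univ ≤ 1)
    (hper : ∀ i : Fin t, ∀ x ∈ A i,
      (∀ j : Fin t, j ≠ i + 1 → κ x (A j) = 0) ∧ κ x (A (i + 1)) = κ x Set.univ)
    (ν : Measure E) [IsProbabilityMeasure ν] {θ : ℝ} (hθ : 0 < θ) (hθ1 : θ ≤ 1)
    (hQSD : Measure.bind ν (fun x => κ x) = ENNReal.ofReal θ • ν) :
    Measure.bind ((ν (A 0))⁻¹ • ν.restrict (A 0)) (fun x => iterK κ t x)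
      = ENNReal.ofReal (θ ^ t) • ((ν (A 0))⁻¹ • ν.restrict (A 0)) :=
  stmt1_general κ A hAmeas hAcover hper ν hθ hQSD
end

section
/- (Spectral gap for the periodic chain.) In the same setting, let h ∈ B̂_V satisfy P̂_1 h = θ h with h(∂) = 0 and ν P_i h = 0 for all i ∈ {0,...,t-1}. If h is not identically zero on E, then |θ| ≤ θ_0 α^{1/t}. -/
/-!
Since `h` vanishes at `∂`, `g = h ∘ some` is an eigenfunction of `κ` itself. The kernel moves
`A i` into `A (i + 1)`, so for `θ ≠ 0` the eigenfunction cannot vanish identically on `A 0`;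
pick `x₀ ∈ A 0` with `g x₀ ≠ 0`. Integrating `g` against the `k t`-step kernel from `x₀` gives
`θ ^ (k t) g x₀`, whereas the convergence hypothesis, applied to the real and imaginary parts of
`a g` restricted to `A 0` (whose `ν`-integral vanishes), bounds `a` times its norm by
`2 C_Q α ^ k V x₀ θ₀ ^ (k t)`. Letting `k → ∞` gives `‖θ‖ ^ t ≤ θ₀ ^ t α`. The integrability of
`g` under the `k t`-step kernel comes from the same hypothesis, applied to the truncations
`min V N` on `A 0` and monotone convergence.
-/

open MeasureTheory ProbabilityTheory

open Filter Topology Fin.NatCast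

section IterK

variable {E : Type*} [MeasurableSpace E] (κ : Kernel E E)

lemma iterK_zero : iterK κ 0 = Kernel.id := rfl

@[simp] lemma iterK_zero_apply (x : E) : iterK κ 0 x = Measure.dirac x := rfl

@[simp] lemma iterK_succ (n : ℕ) : iterK κ (n + 1) = κ ∘ₖ iterK κ n := rfl

instance isFiniteKernel_iterK [IsFiniteKernel κ] : ∀ n, IsFiniteKernel (iterK κ n)
  | 0 => by rw [iterK_zero]; infer_instance
  | n + 1 => by have := isFiniteKernel_iterK n; rw [iterK_succ]; infer_instance

variable {κ}

lemma integral_iterK_of_integral_eq_mul [IsFiniteKernel κ] {g : E → ℂ} (hg : Measurable g)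
    {θ : ℂ} (hθ : θ ≠ 0) (heig : ∀ x, ∫ y, g y ∂κ x = θ * g x) :
    ∀ (n : ℕ) (x : E), Integrable g (iterK κ n x) → ∫ y, g y ∂iterK κ n x = θ ^ n * g x
  | 0, x, _ => by
    rw [iterK_zero_apply, integral_dirac' g x hg.stronglyMeasurable, pow_zero, one_mul]
  | n + 1, x, hint => by
    rw [iterK_succ] at hint ⊢
    have hθg : Integrable (fun z => θ * g z) (iterK κ n x) :=
      hint.integral_comp.congr (ae_of_all _ heig)
    have hgn : Integrable g (iterK κ n x) := by
      simpa [← mul_assoc, inv_mul_cancel₀ hθ] using hθg.const_mul θ⁻¹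
    rw [Kernel.integral_comp hint, integral_congr_ae (ae_of_all _ heig), integral_const_mul,
      integral_iterK_of_integral_eq_mul hg hθ heig n x hgn, pow_succ]
    ring

lemma ae_mem_iterK {t : ℕ} [NeZero t] {A : Fin t → Set E} (hA : ∀ i, MeasurableSet (A i))
    (hcyc : ∀ i, ∀ x ∈ A i, ∀ᵐ y ∂κ x, y ∈ A (i + 1)) :
    ∀ (n : ℕ) (i : Fin t), ∀ x ∈ A i, ∀ᵐ y ∂iterK κ n x, y ∈ A (i + n)
  | 0, i, x, hx => by
    rw [iterK_zero_apply, Nat.cast_zero, add_zero]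
    exact (ae_dirac_iff (hA i)).2 hx
  | n + 1, i, x, hx => by
    rw [iterK_succ]
    refine Kernel.ae_comp_of_ae_ae (hA _) ?_
    filter_upwards [ae_mem_iterK hA hcyc n i x hx] with y hy
    simpa [add_assoc] using hcyc _ y hy

lemma abs_le_of_abs_integral_iterK_zero_le {s : Set E} (hs : MeasurableSet s) {f V : E → ℝ}
    (hf : Measurable f) (h : ∀ x ∈ s, |∫ y, s.indicator f y ∂iterK κ 0 x| ≤ V x) {x : E}
    (hx : x ∈ s) : |f x| ≤ V x := by
  simpa [integral_dirac' _ x (hf.indicator hs).stronglyMeasurable, Set.indicator_of_mem hx]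
    using h x hx

lemma ae_mem_iterK_mul {t : ℕ} [NeZero t] {A : Fin t → Set E} (hA : ∀ i, MeasurableSet (A i))
    (hcyc : ∀ i, ∀ x ∈ A i, ∀ᵐ y ∂κ x, y ∈ A (i + 1)) (k : ℕ) {x : E} (hx : x ∈ A 0) :
    ∀ᵐ y ∂iterK κ (k * t) x, y ∈ A 0 := by
  simpa [Fin.natCast_eq_zero.2 (dvd_mul_left t k)] using ae_mem_iterK hA hcyc (k * t) 0 x hx

end IterK

lemma ae_mem_of_measure_eq_zero {α ι : Type*} [MeasurableSpace α] [Countable ι]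
    {A : ι → Set α} (hcover : ⋃ j, A j = Set.univ) {μ : Measure α} {i : ι}
    (h : ∀ j ≠ i, μ (A j) = 0) : ∀ᵐ y ∂μ, y ∈ A i := by
  refine measure_mono_null (fun y hy => ?_)
    (measure_iUnion_null fun j => measure_iUnion_null fun hj => h j hj)
  obtain ⟨j, hj⟩ := Set.mem_iUnion.1 (hcover.symm ▸ Set.mem_univ y : y ∈ ⋃ j, A j)
  exact Set.mem_iUnion₂.2 ⟨j, fun hji => hy (hji ▸ hj), hj⟩

lemma exists_mem_ne_zero_of_integral_ne_zero {α : Type*} [MeasurableSpace α] {μ : Measure α}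
    {s : Set α} {g : α → ℂ} (hs : ∀ᵐ y ∂μ, y ∈ s) (hg : ∫ y, g y ∂μ ≠ 0) :
    ∃ y ∈ s, g y ≠ 0 := by
  by_contra! hzero
  exact hg (integral_eq_zero_of_ae (by filter_upwards [hs] with y hy using hzero y hy))

lemma integrable_of_forall_integral_min_natCast_le {α : Type*} [MeasurableSpace α]
    {μ : Measure α} [IsFiniteMeasure μ] {f : α → ℝ} (hf : Measurable f) (h0 : 0 ≤ f) {B : ℝ}
    (hB : ∀ N : ℕ, ∫ x, min (f x) N ∂μ ≤ B) : Integrable f μ := by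
  refine ⟨hf.aestronglyMeasurable, (hasFiniteIntegral_iff_ofReal (ae_of_all _ h0)).2 ?_⟩
  have hlim : Tendsto (fun N : ℕ => ∫⁻ x, ENNReal.ofReal (min (f x) N) ∂μ) atTop
      (𝓝 (∫⁻ x, ENNReal.ofReal (f x) ∂μ)) := by
    refine lintegral_tendsto_of_tendsto_of_monotone
      (fun N => (hf.min measurable_const).ennreal_ofReal.aemeasurable)
      (ae_of_all _ fun x N M hNM => ENNReal.ofReal_le_ofReal (min_le_min_left _ ?_))
      (ae_of_all _ fun x => tendsto_atTop_of_eventually_const (i₀ := ⌈f x⌉₊) fun N hN => ?_)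
    · exact_mod_cast hNM
    · rw [min_eq_left ((Nat.le_ceil _).trans (by exact_mod_cast hN))]
  refine (le_of_tendsto' hlim fun N => ?_).trans_lt (ENNReal.ofReal_lt_top (r := B))
  have hmin : Integrable (fun x => min (f x) N) μ :=
    (integrable_const (N : ℝ)).mono' (hf.min measurable_const).aestronglyMeasurable
      (ae_of_all _ fun x => by
        rw [Real.norm_of_nonneg (le_min (h0 x) N.cast_nonneg)]
        exact min_le_right _ _)
  rw [← ofReal_integral_eq_lintegral_ofReal hmin
    (ae_of_all _ fun x => le_min (h0 x) N.cast_nonneg)]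
  exact ENNReal.ofReal_le_ofReal (hB N)

section ConvergenceBound

variable {E : Type*} [MeasurableSpace E] {s : Set E} {V : E → ℝ} {μ ν : Measure E}
  {c d B : ℝ}

lemma integrable_indicator_of_bound [IsFiniteMeasure μ] (hs : MeasurableSet s)
    (hV : Measurable V) (hV0 : ∀ x ∈ s, 0 ≤ V x) (hνV : Integrable V ν) (hc : 0 < c)
    (hbound : ∀ f : E → ℝ, Measurable f → (∀ x ∈ s, |f x| ≤ V x) → (∀ x ∉ s, f x = 0) →
      |c * ∫ y, f y ∂μ - d * ∫ y, f y ∂ν| ≤ B) :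
    Integrable (s.indicator V) μ := by
  have hW0 : 0 ≤ s.indicator V := Set.indicator_nonneg hV0
  refine integrable_of_forall_integral_min_natCast_le (hV.indicator hs) hW0
    (B := (B + |d| * ∫ y, |V y| ∂ν) / c) fun N => ?_
  set f : E → ℝ := fun y => min (s.indicator V y) N
  have hf : Measurable f := (hV.indicator hs).min measurable_const
  have hfV : ∀ x ∈ s, |f x| ≤ V x := fun x hx => by
    rw [abs_of_nonneg (le_min (hW0 x) N.cast_nonneg)]
    exact (min_le_left _ _).trans (Set.indicator_of_mem hx V).le
  have hf0 : ∀ x ∉ s, f x = 0 := fun x hx => by simp [f, Set.indicator_of_notMem hx]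
  have hfν : ∫ y, f y ∂ν ≤ ∫ y, |V y| ∂ν := by
    refine integral_mono_of_nonneg (ae_of_all _ fun y => le_min (hW0 y) N.cast_nonneg)
      hνV.abs (ae_of_all _ fun y => ?_)
    by_cases hy : y ∈ s
    · exact (le_abs_self _).trans ((hfV y hy).trans (le_abs_self _))
    · simp [hf0 y hy]
  have hdf : d * ∫ y, f y ∂ν ≤ |d| * ∫ y, |V y| ∂ν :=
    (mul_le_mul_of_nonneg_right (le_abs_self d)
      (integral_nonneg fun y => le_min (hW0 y) N.cast_nonneg)).trans
      (mul_le_mul_of_nonneg_left hfν (abs_nonneg d))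
  rw [le_div_iff₀' hc]
  linarith [(abs_le.1 (hbound f hf hfV hf0)).2]

lemma norm_sub_le_of_bound {F : E → ℂ} (hF : Measurable F) (hFμ : Integrable F μ)
    (hFν : Integrable F ν) (hre : ∀ x ∈ s, |(F x).re| ≤ V x) (him : ∀ x ∈ s, |(F x).im| ≤ V x)
    (hF0 : ∀ x ∉ s, F x = 0)
    (hbound : ∀ f : E → ℝ, Measurable f → (∀ x ∈ s, |f x| ≤ V x) → (∀ x ∉ s, f x = 0) →
      |c * ∫ y, f y ∂μ - d * ∫ y, f y ∂ν| ≤ B) :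
    ‖(c : ℂ) * ∫ y, F y ∂μ - d * ∫ y, F y ∂ν‖ ≤ 2 * B := by
  have hre' := hbound (fun y => (F y).re) (Complex.measurable_re.comp hF) hre
    (fun x hx => by simp [hF0 x hx])
  have him' := hbound (fun y => (F y).im) (Complex.measurable_im.comp hF) him
    (fun x hx => by simp [hF0 x hx])
  rw [show ∫ y, (F y).re ∂μ = (∫ y, F y ∂μ).re from integral_re hFμ,
    show ∫ y, (F y).re ∂ν = (∫ y, F y ∂ν).re from integral_re hFν] at hre'
  rw [show ∫ y, (F y).im ∂μ = (∫ y, F y ∂μ).im from integral_im hFμ,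
    show ∫ y, (F y).im ∂ν = (∫ y, F y ∂ν).im from integral_im hFν] at him'
  refine (Complex.norm_le_abs_re_add_abs_im _).trans ?_
  simp only [Complex.sub_re, Complex.sub_im, Complex.re_ofReal_mul, Complex.im_ofReal_mul]
  linarith

lemma norm_pow_mul_le_of_bound {κ : Kernel E E} [IsFiniteKernel κ] {G : E → ℂ} {θ : ℂ}
    (hG : Measurable G) (hθ : θ ≠ 0) (heig : ∀ x, ∫ y, G y ∂κ x = θ * G x)
    (hs : MeasurableSet s) (hV : Measurable V) (hνV : Integrable V ν)
    (hre : ∀ x ∈ s, |(G x).re| ≤ V x) (him : ∀ x ∈ s, |(G x).im| ≤ V x)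
    (hνs : ∀ᵐ y ∂ν, y ∈ s) (hGν : ∫ y, G y ∂ν = 0)
    {n : ℕ} {x₀ : E} (hret : ∀ᵐ y ∂iterK κ n x₀, y ∈ s) (hc : 0 < c)
    (hbound : ∀ f : E → ℝ, Measurable f → (∀ x ∈ s, |f x| ≤ V x) → (∀ x ∉ s, f x = 0) →
      |c * ∫ y, f y ∂iterK κ n x₀ - d * ∫ y, f y ∂ν| ≤ B) :
    c * (‖θ‖ ^ n * ‖G x₀‖) ≤ 2 * B := by
  set F := s.indicator G
  have hF : Measurable F := hG.indicator hs
  have hFG : ∀ m : Measure E, (∀ᵐ y ∂m, y ∈ s) → F =ᵐ[m] G := fun m hm => by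
    filter_upwards [hm] with y hy using Set.indicator_of_mem hy G
  have hFV : ∀ y, ‖F y‖ ≤ 2 * s.indicator V y := fun y => by
    by_cases hy : y ∈ s
    · simp only [F, Set.indicator_of_mem hy]
      linarith [Complex.norm_le_abs_re_add_abs_im (G y), hre y hy, him y hy]
    · simp [F, hy]
  have hW := integrable_indicator_of_bound hs hV (fun x hx => (abs_nonneg _).trans (hre x hx))
    hνV hc hbound
  have hFμ : Integrable F (iterK κ n x₀) :=
    (hW.const_mul 2).mono' hF.aestronglyMeasurable (ae_of_all _ hFV)
  have hFν : Integrable F ν :=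
    ((hνV.indicator hs).const_mul 2).mono' hF.aestronglyMeasurable (ae_of_all _ hFV)
  have hμF : ∫ y, F y ∂iterK κ n x₀ = θ ^ n * G x₀ := by
    rw [integral_congr_ae (hFG _ hret)]
    exact integral_iterK_of_integral_eq_mul hG hθ heig n x₀ (hFμ.congr (hFG _ hret))
  have hνF : ∫ y, F y ∂ν = 0 := by rw [integral_congr_ae (hFG _ hνs), hGν]
  have key := norm_sub_le_of_bound hF hFμ hFν
    (fun x hx => by simpa [F, Set.indicator_of_mem hx] using hre x hx)
    (fun x hx => by simpa [F, Set.indicator_of_mem hx] using him x hx)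
    (fun x hx => Set.indicator_of_notMem hx G) hbound
  rwa [hμF, hνF, mul_zero, sub_zero, norm_mul, norm_mul, norm_pow, Complex.norm_real,
    Real.norm_of_nonneg hc.le] at key

end ConvergenceBound

lemma exists_mem_add_ne_zero_of_integral_eq_mul {E : Type*} [MeasurableSpace E]
    {κ : Kernel E E} {t : ℕ} [NeZero t] {A : Fin t → Set E}
    (hcyc : ∀ i, ∀ x ∈ A i, ∀ᵐ y ∂κ x, y ∈ A (i + 1)) {g : E → ℂ} {θ : ℂ} (hθ : θ ≠ 0)
    (heig : ∀ x, ∫ y, g y ∂κ x = θ * g x) {i : Fin t} {x : E} (hx : x ∈ A i) (hgx : g x ≠ 0) :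
    ∀ n : ℕ, ∃ y ∈ A (i + n), g y ≠ 0
  | 0 => ⟨x, by simpa using hx, hgx⟩
  | n + 1 => by
    obtain ⟨y, hy, hgy⟩ := exists_mem_add_ne_zero_of_integral_eq_mul hcyc hθ heig hx hgx n
    simpa [add_assoc] using
      exists_mem_ne_zero_of_integral_ne_zero (hcyc _ y hy) (heig y ▸ mul_ne_zero hθ hgy)

lemma le_of_forall_mul_pow_le_mul_pow {r q c C : ℝ} (hc : 0 < c) (hq : 0 < q)
    (h : ∀ k : ℕ, c * r ^ k ≤ C * q ^ k) : r ≤ q := by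
  by_contra! hqr
  obtain ⟨k, hk⟩ := pow_unbounded_of_one_lt (C / c) ((one_lt_div hq).2 hqr)
  rw [div_lt_iff₀ hc, div_pow, div_mul_eq_mul_div, lt_div_iff₀ (pow_pos hq k)] at hk
  linarith [h k]

lemma le_mul_rpow_one_div_of_forall {r c C θ₀ α : ℝ} {t : ℕ} (ht : t ≠ 0) (hr : 0 ≤ r)
    (hc : 0 < c) (hθ₀ : 0 < θ₀) (hα : 0 < α)
    (h : ∀ k : ℕ, (θ₀ ^ (k * t))⁻¹ * (r ^ (k * t) * c) ≤ C * α ^ k) :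
    r ≤ θ₀ * α ^ ((1 : ℝ) / t) := by
  have hrt : r ^ t ≤ θ₀ ^ t * α := le_of_forall_mul_pow_le_mul_pow hc (by positivity) fun k => by
    have hk := (inv_mul_le_iff₀ (by positivity)).1 (h k)
    calc c * (r ^ t) ^ k = r ^ (k * t) * c := by ring
      _ ≤ θ₀ ^ (k * t) * (C * α ^ k) := hk
      _ = C * (θ₀ ^ t * α) ^ k := by ring
  rwa [← pow_le_pow_iff_left₀ hr (by positivity) ht, mul_pow, one_div,
    Real.rpow_inv_natCast_pow hα.le ht]

theorem stmt11_general
    {E : Type*} [MeasurableSpace E] (κ : Kernel E E) {t : ℕ} [NeZero t]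
    (A : Fin t → Set E)
    (hAmeas : ∀ i, MeasurableSet (A i))
    (hAcover : (⋃ i, A i) = Set.univ)
    (hsub : ∀ x, κ x Set.univ ≤ 1)
    (hper : ∀ i : Fin t, ∀ x ∈ A i,
      (∀ j : Fin t, j ≠ i + 1 → κ x (A j) = 0) ∧ κ x (A (i + 1)) = κ x Set.univ)
    (V η : E → ℝ) (hVmeas : Measurable V)
    (ν : Measure E) [IsProbabilityMeasure ν] (hν0 : ν (A (0 : Fin t)) = 1)
    (hνV : Integrable V ν)
    {θ0 CQ α : ℝ} (hθ0 : 0 < θ0)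
    (hα0 : 0 < α)
    (hconv : ∀ f : E → ℝ, Measurable f → (∀ x ∈ A (0 : Fin t), |f x| ≤ V x) →
      (∀ x ∉ A (0 : Fin t), f x = 0) →
      ∀ k : ℕ, ∀ x ∈ A (0 : Fin t),
        |(θ0 ^ (k * t))⁻¹ * (∫ y, f y ∂(iterK κ (k * t) x)) - η x * ∫ y, f y ∂ν|
          ≤ CQ * α ^ k * V x)
    (h : Option E → ℂ) {θ : ℂ}
    (hBV : ∃ a : ℝ, 0 < a ∧
      (Measurable (fun x : E => a * (h (some x)).re) ∧
        ∀ i : Fin t, ∀ x ∈ A (0 : Fin t),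
          |∫ y, (A i).indicator (fun z => a * (h (some z)).re) y
              ∂(iterK κ (i : ℕ) x)| ≤ V x) ∧
      (Measurable (fun x : E => a * (h (some x)).im) ∧
        ∀ i : Fin t, ∀ x ∈ A (0 : Fin t),
          |∫ y, (A i).indicator (fun z => a * (h (some z)).im) y
              ∂(iterK κ (i : ℕ) x)| ≤ V x))
    (heigE : ∀ x : E,
      (∫ y, h (some y) ∂(κ x)) + h none * (1 - ((((κ x) Set.univ).toReal : ℝ) : ℂ))
        = θ * h (some x))
    (hd0 : h none = 0)
    (hnull : ∀ i : Fin t, (∫ x, (∫ y, h (some y) ∂(iterK κ (i : ℕ) x)) ∂ν) = 0)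
    (hne : ∃ x : E, h (some x) ≠ 0) :
    ‖θ‖ ≤ θ0 * α ^ ((1 : ℝ) / (t : ℝ)) := by
  obtain ⟨a, ha, ⟨hreM, hreB⟩, ⟨himM, himB⟩⟩ := hBV
  rcases eq_or_ne θ 0 with rfl | hθ
  · rw [norm_zero]; positivity
  have hg : Measurable fun x => h (some x) :=
    measurable_of_re_im (by simpa [ha.ne'] using hreM.const_mul a⁻¹)
      (by simpa [ha.ne'] using himM.const_mul a⁻¹)
  set G : E → ℂ := fun x => a * h (some x)
  have hG : Measurable G := hg.const_mul _
  have : IsFiniteKernel κ := ⟨⟨1, ENNReal.one_lt_top, hsub⟩⟩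
  have heig : ∀ x, ∫ y, G y ∂κ x = θ * G x := fun x => by
    rw [integral_const_mul, mul_left_comm, ← heigE x, hd0, zero_mul, add_zero]
  have hcyc : ∀ i, ∀ x ∈ A i, ∀ᵐ y ∂κ x, y ∈ A (i + 1) := fun i x hx =>
    ae_mem_of_measure_eq_zero hAcover (hper i x hx).1
  have hre : ∀ x ∈ A 0, |(G x).re| ≤ V x := fun x hx => by
    simpa [G] using abs_le_of_abs_integral_iterK_zero_le (hAmeas 0) hreM (hreB 0) hx
  have him : ∀ x ∈ A 0, |(G x).im| ≤ V x := fun x hx => by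
    simpa [G] using abs_le_of_abs_integral_iterK_zero_le (hAmeas 0) himM (himB 0) hx
  obtain ⟨x₁, hx₁⟩ := hne
  obtain ⟨i, hi⟩ := Set.mem_iUnion.1 (hAcover ▸ Set.mem_univ x₁)
  obtain ⟨x₀, hx₀, hGx₀⟩ : ∃ x₀ ∈ A 0, G x₀ ≠ 0 := by
    simpa using exists_mem_add_ne_zero_of_integral_eq_mul hcyc hθ heig hi
      (mul_ne_zero (Complex.ofReal_ne_zero.2 ha.ne') hx₁) (-i).val
  have hνs : ∀ᵐ y ∂ν, y ∈ A 0 := (prob_compl_eq_zero_iff (hAmeas 0)).2 hν0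
  have hGν : ∫ y, G y ∂ν = 0 := by
    have := hnull 0
    simp only [Fin.val_zero, iterK_zero_apply, integral_dirac' _ _ hg.stronglyMeasurable] at this
    rw [integral_const_mul, this, mul_zero]
  refine le_mul_rpow_one_div_of_forall (NeZero.ne t) (norm_nonneg θ) (norm_pos_iff.2 hGx₀) hθ0
    hα0 (C := 2 * (CQ * V x₀)) fun k => ?_
  have := norm_pow_mul_le_of_bound hG hθ heig (hAmeas 0) hVmeas hνV hre him hνs hGν
    (ae_mem_iterK_mul hAmeas hcyc k hx₀) (inv_pos.2 (pow_pos hθ0 _))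
    fun f hf hfV hf0 => hconv f hf hfV hf0 k x₀ hx₀
  linarith

theorem stmt11
    {E : Type*} [MeasurableSpace E] (κ : Kernel E E) {t : ℕ} [NeZero t]
    (A : Fin t → Set E)
    (hAmeas : ∀ i, MeasurableSet (A i))
    (hAdisj : ∀ i j, i ≠ j → Disjoint (A i) (A j))
    (hAcover : (⋃ i, A i) = Set.univ)
    (hsub : ∀ x, κ x Set.univ ≤ 1)
    (hper : ∀ i : Fin t, ∀ x ∈ A i,
      (∀ j : Fin t, j ≠ i + 1 → κ x (A j) = 0) ∧ κ x (A (i + 1)) = κ x Set.univ)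
    (V η : E → ℝ) (hVmeas : Measurable V) (hV1 : ∀ x ∈ A (0 : Fin t), 1 ≤ V x)
    (hηmeas : Measurable η) (hη0 : ∀ x, 0 ≤ η x)
    (hηsupp : ∀ x ∉ A (0 : Fin t), η x = 0) (hηne : ∃ x, η x ≠ 0)
    (hbdd : BddAbove ((fun x => η x / V x) '' A (0 : Fin t)))
    (ν : Measure E) [IsProbabilityMeasure ν] (hν0 : ν (A (0 : Fin t)) = 1)
    (hνV : Integrable V ν) (hνη : 0 < ∫ x, η x ∂ν)
    {θ0 CQ α : ℝ} (hθ0 : 0 < θ0) (hθ01 : θ0 ≤ 1) (hCQ : 0 ≤ CQ)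
    (hα0 : 0 < α) (hα1 : α < 1)
    (hconv : ∀ f : E → ℝ, Measurable f → (∀ x ∈ A (0 : Fin t), |f x| ≤ V x) →
      (∀ x ∉ A (0 : Fin t), f x = 0) →
      ∀ k : ℕ, ∀ x ∈ A (0 : Fin t),
        |(θ0 ^ (k * t))⁻¹ * (∫ y, f y ∂(iterK κ (k * t) x)) - η x * ∫ y, f y ∂ν|
          ≤ CQ * α ^ k * V x)
    (h : Option E → ℂ) {θ : ℂ}
    (hBV : ∃ a : ℝ, 0 < a ∧
      (Measurable (fun x : E => a * (h (some x)).re) ∧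
        ∀ i : Fin t, ∀ x ∈ A (0 : Fin t),
          |∫ y, (A i).indicator (fun z => a * (h (some z)).re) y
              ∂(iterK κ (i : ℕ) x)| ≤ V x) ∧
      (Measurable (fun x : E => a * (h (some x)).im) ∧
        ∀ i : Fin t, ∀ x ∈ A (0 : Fin t),
          |∫ y, (A i).indicator (fun z => a * (h (some z)).im) y
              ∂(iterK κ (i : ℕ) x)| ≤ V x))
    (heigE : ∀ x : E,
      (∫ y, h (some y) ∂(κ x)) + h none * (1 - ((((κ x) Set.univ).toReal : ℝ) : ℂ))
        = θ * h (some x))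
    (heigd : h none = θ * h none)
    (hd0 : h none = 0)
    (hnull : ∀ i : Fin t, (∫ x, (∫ y, h (some y) ∂(iterK κ (i : ℕ) x)) ∂ν) = 0)
    (hne : ∃ x : E, h (some x) ≠ 0) :
    ‖θ‖ ≤ θ0 * α ^ ((1 : ℝ) / (t : ℝ)) :=
  stmt11_general κ A hAmeas hAcover hsub hper V η hVmeas ν hν0 hνV hθ0 hα0 hconv h hBV heigE hd0
    hnull hne
end

section
/- (Uniqueness of the exponentially attracting QSD for Q.) Suppose |θ_0^{-kt} Q_k f(x) − η(x)ν(f)| ≤ C_Q α^k V(x) for all |f| ≤ V, k ≥ 0, x ∈ A_0. Then ν is the unique quasi-stationary distribution μ for Q satisfying μ(η) > 0 and μ(V) < ∞. -/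
open MeasureTheory ProbabilityTheory

/-!
Write `Q_k = iterK κ k` and `P k = θ0 ^ (k * t)`. Testing the hypothesis on indicators gives
`(P k)⁻¹ Q_k(x, s) → η x * ν s` for every `x`, dominated by a multiple of `V x`.

Invariance of `ν`: fix `x` with `η x > 0`. The sequence `(P k)⁻¹ Q_{k+1}(x, s)` tends to
`θ0 ^ t * η x * ν s` by shifting the index, and to `η x * (κ ∘ₘ ν) s` by writing
`Q_{k+1}(x, s) = ∫ κ y s ∂Q_k(x)` and testing the hypothesis on `y ↦ κ y s ≤ C V y`.
Since `Q_k(x)` is eventually a finite measure, `κ y s` is finite for `Q_k(x)`-a.e. `y`, hence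
also for `ν`-a.e. `y`; this is what lets `∫ (κ y s).toReal` be computed as a lintegral.

Uniqueness: if `κ ∘ₘ μ = c • μ`, integrating the pointwise limit against `μ` (dominated
convergence) gives `(P k)⁻¹ c ^ k μ s → (∫ η ∂μ) ν s`; for `s = univ` the left side is the
scalar sequence itself, so its limit is `∫ η ∂μ > 0`, and then `μ s = ν s`.
-/

open Filter Topology
open scoped ENNReal

lemma abs_indicator_one_le {Y : Type*} {V : Y → ℝ} (hV : ∀ x, 1 ≤ V x) (s : Set Y) (x : Y) :
    |s.indicator (1 : Y → ℝ) x| ≤ V x := by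
  by_cases hx : x ∈ s
  · simpa [hx] using hV x
  · simpa [hx] using zero_le_one.trans (hV x)

lemma exists_pos_le_mul_of_bddAbove_div {Y : Type*} {f V : Y → ℝ} (hV : ∀ x, 0 < V x)
    (hf : BddAbove (Set.range fun x => f x / V x)) : ∃ b, 0 < b ∧ ∀ x, f x ≤ b * V x := by
  obtain ⟨u, hu⟩ := hf
  refine ⟨max u 1, one_pos.trans_le (le_max_right u 1), fun x => ?_⟩
  rw [← div_le_iff₀ (hV x)]
  exact (hu ⟨x, rfl⟩).trans (le_max_left u 1)

section

variable {X : Type*} [MeasurableSpace X]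

lemma iterK_one (κ : Kernel X X) : iterK κ 1 = κ := Kernel.comp_id κ

lemma iterK_succ_apply (κ : Kernel X X) (k : ℕ) (x : X) :
    iterK κ (k + 1) x = κ ∘ₘ iterK κ k x :=
  Kernel.comp_apply κ (iterK κ k) x

lemma iterK_comp_eq_pow_smul {κ : Kernel X X} {μ : Measure X} {c : ℝ≥0∞}
    (hμ : κ ∘ₘ μ = c • μ) (k : ℕ) : iterK κ k ∘ₘ μ = c ^ k • μ := by
  induction k with
  | zero => simp [iterK, Measure.id_comp]
  | succ k ih =>
    rw [iterK, ← Measure.comp_assoc, ih, Measure.comp_smul, hμ, smul_smul, pow_succ]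

def ConvergesGeometrically (κ : Kernel X X) (t : ℕ) (V η : X → ℝ) (ν : Measure X)
    (θ0 CQ α : ℝ) : Prop :=
  ∀ f : X → ℝ, Measurable f → (∀ x, |f x| ≤ V x) → ∀ k : ℕ, ∀ x : X,
    |(θ0 ^ (k * t))⁻¹ * (∫ y, f y ∂(iterK κ k x)) - η x * ∫ y, f y ∂ν| ≤ CQ * α ^ k * V x

namespace ConvergesGeometrically

variable {κ : Kernel X X} {t : ℕ} {V η : X → ℝ} {ν : Measure X} {θ0 CQ α : ℝ}

theorem tendsto_integral (h : ConvergesGeometrically κ t V η ν θ0 CQ α) (hα0 : 0 ≤ α)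
    (hα1 : α < 1) {f : X → ℝ} (hf : Measurable f) {C : ℝ} (hC : 0 < C)
    (hfV : ∀ x, |f x| ≤ C * V x) (x : X) :
    Tendsto (fun k : ℕ => (θ0 ^ (k * t))⁻¹ * ∫ y, f y ∂(iterK κ k x)) atTop
      (𝓝 (η x * ∫ y, f y ∂ν)) := by
  have hbound (k : ℕ) : dist ((θ0 ^ (k * t))⁻¹ * ∫ y, f y ∂(iterK κ k x)) (η x * ∫ y, f y ∂ν)
      ≤ C * (CQ * α ^ k * V x) := by
    have hk := h (fun y => f y / C) (hf.div_const C)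
      (fun y => by rw [abs_div, abs_of_pos hC, div_le_iff₀ hC, mul_comm]; exact hfV y) k x
    rw [integral_div, integral_div] at hk
    calc _ = C * |(θ0 ^ (k * t))⁻¹ * ((∫ y, f y ∂(iterK κ k x)) / C)
            - η x * ((∫ y, f y ∂ν) / C)| := by
          rw [Real.dist_eq, ← abs_of_pos hC, ← abs_mul, abs_of_pos hC]
          congr 1
          field_simp
      _ ≤ _ := mul_le_mul_of_nonneg_left hk hC.le
  have hrate : Tendsto (fun k : ℕ => C * (CQ * α ^ k * V x)) atTop (𝓝 0) := by
    simpa using (((tendsto_pow_atTop_nhds_zero_of_lt_one hα0 hα1).const_mul CQ).mul_const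
      (V x)).const_mul C
  exact tendsto_iff_dist_tendsto_zero.2 (squeeze_zero (fun _ => dist_nonneg) hbound hrate)

theorem toReal_iterK_le (h : ConvergesGeometrically κ t V η ν θ0 CQ α)
    [IsProbabilityMeasure ν] (hV : ∀ x, 1 ≤ V x) (hη0 : ∀ x, 0 ≤ η x) {b : ℝ}
    (hηV : ∀ x, η x ≤ b * V x) {s : Set X} (hs : MeasurableSet s) (k : ℕ) (x : X) :
    (θ0 ^ (k * t))⁻¹ * (iterK κ k x s).toReal ≤ (b + CQ * α ^ k) * V x := by
  have hk := (abs_le.1 (h _ (measurable_one.indicator hs) (abs_indicator_one_le hV s) k x)).2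
  rw [integral_indicator_one hs, integral_indicator_one hs] at hk
  have hνs : η x * ν.real s ≤ η x := mul_le_of_le_one_right (hη0 x) measureReal_le_one
  rw [measureReal_def] at hk
  linarith [hηV x]

theorem eventually_isFiniteMeasure_iterK (h : ConvergesGeometrically κ t V η ν θ0 CQ α)
    [IsProbabilityMeasure ν] (hα0 : 0 ≤ α) (hα1 : α < 1) (hV : ∀ x, 1 ≤ V x) {x : X}
    (hx : 0 < η x) : ∀ᶠ k in atTop, IsFiniteMeasure (iterK κ k x) := by
  have hlim := h.tendsto_integral hα0 hα1 measurable_const one_pos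
    (f := fun _ => (1 : ℝ)) (by simpa using hV) x
  simp only [integral_const, smul_eq_mul, mul_one, probReal_univ] at hlim
  filter_upwards [hlim.eventually (lt_mem_nhds hx)] with k hk
  refine ⟨lt_top_iff_ne_top.2 fun htop => ?_⟩
  simp [measureReal_def, htop] at hk

theorem ae_of_eventually_ae_iterK (h : ConvergesGeometrically κ t V η ν θ0 CQ α)
    [IsFiniteMeasure ν] (hα0 : 0 ≤ α) (hα1 : α < 1) (hV : ∀ x, 1 ≤ V x) {x : X}
    (hx : 0 < η x) {p : X → Prop} (hp : MeasurableSet {y | p y})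
    (hev : ∀ᶠ k in atTop, ∀ᵐ y ∂(iterK κ k x), p y) : ∀ᵐ y ∂ν, p y := by
  have hA : MeasurableSet {y | p y}ᶜ := hp.compl
  have hlim := h.tendsto_integral hα0 hα1 (measurable_one.indicator hA) one_pos
    (by simpa using abs_indicator_one_le hV _) x
  simp only [integral_indicator_one hA] at hlim
  have hzero : Tendsto (fun k : ℕ => (θ0 ^ (k * t))⁻¹ * (iterK κ k x).real {y | p y}ᶜ) atTop
      (𝓝 0) := by
    refine tendsto_const_nhds.congr' ?_
    filter_upwards [hev] with k hk
    rw [measureReal_def, show iterK κ k x {y | p y}ᶜ = 0 from ae_iff.1 hk, ENNReal.toReal_zero,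
      mul_zero]
  have hνA : ν.real {y | p y}ᶜ = 0 := by
    simpa [hx.ne'] using tendsto_nhds_unique hlim hzero
  exact ae_iff.2 ((measureReal_eq_zero_iff).1 hνA)

theorem eventually_ae_kernel_lt_top (h : ConvergesGeometrically κ t V η ν θ0 CQ α)
    [IsProbabilityMeasure ν] (hα0 : 0 ≤ α) (hα1 : α < 1) (hV : ∀ x, 1 ≤ V x) {x : X}
    (hx : 0 < η x) {s : Set X} (hs : MeasurableSet s) :
    ∀ᶠ k in atTop, ∀ᵐ y ∂(iterK κ k x), κ y s < ∞ := by
  filter_upwards [(tendsto_add_atTop_nat 1).eventually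
    (h.eventually_isFiniteMeasure_iterK hα0 hα1 hV hx)] with k hk
  have hfin : iterK κ (k + 1) x s < ∞ := measure_lt_top _ s
  rw [iterK_succ_apply, Measure.bind_apply hs κ.aemeasurable] at hfin
  exact ae_lt_top (κ.measurable_coe hs) hfin.ne

theorem toReal_comp_apply (h : ConvergesGeometrically κ t V η ν θ0 CQ α)
    [IsProbabilityMeasure ν] (hθ0 : 0 < θ0) (hCQ : 0 ≤ CQ) (hα0 : 0 ≤ α) (hα1 : α < 1)
    (hV : ∀ x, 1 ≤ V x) (hη0 : ∀ x, 0 ≤ η x) (hηne : ∃ x, η x ≠ 0) {b : ℝ} (hb : 0 < b)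
    (hηV : ∀ x, η x ≤ b * V x) {s : Set X} (hs : MeasurableSet s) :
    ((κ ∘ₘ ν) s).toReal = θ0 ^ t * ν.real s := by
  obtain ⟨x, hx⟩ : ∃ x, 0 < η x := hηne.imp fun x hx => (hη0 x).lt_of_ne' hx
  have hgV (y : X) : |(κ y s).toReal| ≤ θ0 ^ t * (b + CQ * α) * V y := by
    have hy := h.toReal_iterK_le hV hη0 hηV hs 1 y
    rw [iterK_one, one_mul, pow_one, inv_mul_le_iff₀ (pow_pos hθ0 t)] at hy
    rwa [abs_of_nonneg ENNReal.toReal_nonneg, mul_assoc]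
  have hC : 0 < θ0 ^ t * (b + CQ * α) := by positivity
  have hkernel := h.eventually_ae_kernel_lt_top hα0 hα1 hV hx hs
  have hνκ : ∫ y, (κ y s).toReal ∂ν = ((κ ∘ₘ ν) s).toReal := by
    rw [integral_toReal (κ.measurable_coe hs).aemeasurable (h.ae_of_eventually_ae_iterK hα0 hα1
      hV hx (measurableSet_lt (κ.measurable_coe hs) measurable_const) hkernel),
      Measure.bind_apply hs κ.aemeasurable]
  have hlim_κ : Tendsto (fun k : ℕ => (θ0 ^ (k * t))⁻¹ * (iterK κ (k + 1) x s).toReal) atTop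
      (𝓝 (η x * ((κ ∘ₘ ν) s).toReal)) := by
    rw [← hνκ]
    refine (h.tendsto_integral hα0 hα1 (κ.measurable_coe hs).ennreal_toReal hC hgV x).congr' ?_
    filter_upwards [hkernel] with k hk
    rw [integral_toReal (κ.measurable_coe hs).aemeasurable hk, iterK_succ_apply,
      Measure.bind_apply hs κ.aemeasurable]
  have hlim_s : Tendsto (fun k : ℕ => (θ0 ^ (k * t))⁻¹ * (iterK κ (k + 1) x s).toReal) atTop
      (𝓝 (θ0 ^ t * (η x * ν.real s))) := by
    have hlim := ((h.tendsto_integral hα0 hα1 (measurable_one.indicator hs) one_pos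
      (by simpa using abs_indicator_one_le hV s) x).comp (tendsto_add_atTop_nat 1)).const_mul
      (θ0 ^ t)
    simp only [integral_indicator_one hs] at hlim
    refine hlim.congr fun k => ?_
    simp only [Function.comp_apply, measureReal_def]
    rw [add_mul, one_mul, pow_add]
    field_simp
  have heq := tendsto_nhds_unique hlim_κ hlim_s
  exact mul_left_cancel₀ hx.ne' (by linear_combination heq)

theorem comp_eq_smul (h : ConvergesGeometrically κ t V η ν θ0 CQ α)
    [IsProbabilityMeasure ν] (hθ0 : 0 < θ0) (hCQ : 0 ≤ CQ) (hα0 : 0 ≤ α) (hα1 : α < 1)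
    (hV : ∀ x, 1 ≤ V x) (hη0 : ∀ x, 0 ≤ η x) (hηne : ∃ x, η x ≠ 0) {b : ℝ} (hb : 0 < b)
    (hηV : ∀ x, η x ≤ b * V x) : κ ∘ₘ ν = ENNReal.ofReal (θ0 ^ t) • ν := by
  have key {s : Set X} (hs : MeasurableSet s) :=
    h.toReal_comp_apply hθ0 hCQ hα0 hα1 hV hη0 hηne hb hηV hs
  have huniv : (κ ∘ₘ ν) Set.univ ≠ ∞ := fun htop => by
    have hθt := key MeasurableSet.univ
    simp only [htop, ENNReal.toReal_top, probReal_univ, mul_one] at hθt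
    exact (pow_pos hθ0 t).ne hθt
  ext s hs
  rw [← ENNReal.toReal_eq_toReal_iff' (ne_top_of_le_ne_top huniv (measure_mono s.subset_univ))
    (by simp [ENNReal.mul_eq_top]), key hs, Measure.smul_apply, smul_eq_mul, ENNReal.toReal_mul,
    ENNReal.toReal_ofReal (pow_nonneg hθ0.le t), measureReal_def]

theorem tendsto_measureReal_of_comp_eq_smul (h : ConvergesGeometrically κ t V η ν θ0 CQ α)
    [IsProbabilityMeasure ν] (hθ0 : 0 < θ0) (hCQ : 0 ≤ CQ) (hα0 : 0 ≤ α) (hα1 : α < 1)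
    (hV : ∀ x, 1 ≤ V x) (hη0 : ∀ x, 0 ≤ η x) {b : ℝ} (hηV : ∀ x, η x ≤ b * V x)
    {μ : Measure X} [IsFiniteMeasure μ] {c : ℝ≥0∞} (hc : c ≠ ∞) (hμ : κ ∘ₘ μ = c • μ)
    (hμV : Integrable V μ) {s : Set X} (hs : MeasurableSet s) :
    Tendsto (fun k : ℕ => (θ0 ^ (k * t))⁻¹ * c.toReal ^ k * μ.real s) atTop
      (𝓝 ((∫ x, η x ∂μ) * ν.real s)) := by
  have hmeas (k : ℕ) : Measurable fun x => iterK κ k x s := (iterK κ k).measurable_coe hs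
  have hint (k : ℕ) : ∫ x, (θ0 ^ (k * t))⁻¹ * (iterK κ k x s).toReal ∂μ
      = (θ0 ^ (k * t))⁻¹ * c.toReal ^ k * μ.real s := by
    have hbind : ∫⁻ x, iterK κ k x s ∂μ = c ^ k * μ s := by
      rw [← Measure.bind_apply hs (iterK κ k).aemeasurable, iterK_comp_eq_pow_smul hμ,
        Measure.smul_apply, smul_eq_mul]
    have hfin : ∫⁻ x, iterK κ k x s ∂μ ≠ ∞ := by
      rw [hbind]
      exact ENNReal.mul_ne_top (ENNReal.pow_ne_top hc) (measure_ne_top μ s)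
    rw [integral_const_mul, integral_toReal (hmeas k).aemeasurable (ae_lt_top (hmeas k) hfin),
      hbind, ENNReal.toReal_mul, ENNReal.toReal_pow, measureReal_def, mul_assoc]
  have hbound (k : ℕ) (x : X) :
      ‖(θ0 ^ (k * t))⁻¹ * (iterK κ k x s).toReal‖ ≤ (b + CQ) * V x := by
    have hαk : CQ * α ^ k ≤ CQ := mul_le_of_le_one_right hCQ (pow_le_one₀ hα0 hα1.le)
    rw [Real.norm_of_nonneg (by positivity)]
    exact (h.toReal_iterK_le hV hη0 hηV hs k x).trans
      (mul_le_mul_of_nonneg_right (by linarith) (zero_le_one.trans (hV x)))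
  have hpointwise (x : X) := h.tendsto_integral hα0 hα1 (measurable_one.indicator hs) one_pos
    (by simpa using abs_indicator_one_le hV s) x
  simp only [integral_indicator_one hs, measureReal_def] at hpointwise
  have hdom := tendsto_integral_of_dominated_convergence _
    (fun k => ((hmeas k).ennreal_toReal.const_mul _).aestronglyMeasurable)
    (hμV.const_mul (b + CQ)) (fun k => ae_of_all μ (hbound k)) (ae_of_all μ hpointwise)
  simp only [hint, integral_mul_const] at hdom
  simpa only [measureReal_def] using hdom

theorem eq_of_comp_eq_smul (h : ConvergesGeometrically κ t V η ν θ0 CQ α)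
    [IsProbabilityMeasure ν] (hθ0 : 0 < θ0) (hCQ : 0 ≤ CQ) (hα0 : 0 ≤ α) (hα1 : α < 1)
    (hV : ∀ x, 1 ≤ V x) (hη0 : ∀ x, 0 ≤ η x) {b : ℝ} (hηV : ∀ x, η x ≤ b * V x)
    {μ : Measure X} [IsProbabilityMeasure μ] {c : ℝ≥0∞} (hc : c ≠ ∞) (hμ : κ ∘ₘ μ = c • μ)
    (hμη : 0 < ∫ x, η x ∂μ) (hμV : Integrable V μ) : μ = ν := by
  have hlim {s : Set X} (hs : MeasurableSet s) :=
    h.tendsto_measureReal_of_comp_eq_smul hθ0 hCQ hα0 hα1 hV hη0 hηV hc hμ hμV hs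
  have hscale := hlim MeasurableSet.univ
  simp only [probReal_univ, mul_one] at hscale
  ext s hs
  rw [← ENNReal.toReal_eq_toReal_iff' (measure_ne_top μ s) (measure_ne_top ν s)]
  exact mul_left_cancel₀ hμη.ne' (tendsto_nhds_unique (hscale.mul_const (μ.real s)) (hlim hs))

end ConvergesGeometrically

end

theorem stmt17_general
    {X : Type*} [MeasurableSpace X] (κ : Kernel X X) (t : ℕ)
    (V η : X → ℝ) (hV1 : ∀ x, 1 ≤ V x)
    (hη0 : ∀ x, 0 ≤ η x) (hηne : ∃ x, η x ≠ 0)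
    (hbdd : BddAbove (Set.range fun x => η x / V x))
    (ν : Measure X) [IsProbabilityMeasure ν]
    {θ0 CQ α : ℝ} (hθ0 : 0 < θ0) (hCQ : 0 ≤ CQ)
    (hα0 : 0 < α) (hα1 : α < 1)
    (hconv : ∀ f : X → ℝ, Measurable f → (∀ x, |f x| ≤ V x) →
      ∀ k : ℕ, ∀ x : X,
        |(θ0 ^ (k * t))⁻¹ * (∫ y, f y ∂(iterK κ k x)) - η x * ∫ y, f y ∂ν|
          ≤ CQ * α ^ k * V x)
    :
    (∃ ρ : ℝ, 0 < ρ ∧ Measure.bind ν (fun x => iterK κ 1 x) = ENNReal.ofReal ρ • ν) ∧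
      ∀ μ : Measure X, IsProbabilityMeasure μ →
        ∀ ρ : ℝ, 0 < ρ →
          Measure.bind μ (fun x => iterK κ 1 x) = ENNReal.ofReal ρ • μ →
          0 < ∫ x, η x ∂μ → Integrable V μ → μ = ν := by
  have h : ConvergesGeometrically κ t V η ν θ0 CQ α := hconv
  obtain ⟨b, hb, hηV⟩ :=
    exists_pos_le_mul_of_bddAbove_div (fun x => one_pos.trans_le (hV1 x)) hbdd
  simp only [iterK_one]
  exact ⟨⟨θ0 ^ t, pow_pos hθ0 t, h.comp_eq_smul hθ0 hCQ hα0.le hα1 hV1 hη0 hηne hb hηV⟩,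
    fun μ _ ρ _ hμ hμη hμV =>
      h.eq_of_comp_eq_smul hθ0 hCQ hα0.le hα1 hV1 hη0 hηV ENNReal.ofReal_ne_top hμ hμη hμV⟩

theorem stmt17
    {X : Type*} [MeasurableSpace X] [Nonempty X] (κ : Kernel X X) (t : ℕ)
    (V η : X → ℝ) (hVmeas : Measurable V) (hV1 : ∀ x, 1 ≤ V x)
    (hηmeas : Measurable η) (hη0 : ∀ x, 0 ≤ η x) (hηne : ∃ x, η x ≠ 0)
    (hbdd : BddAbove (Set.range fun x => η x / V x))
    (ν : Measure X) [IsProbabilityMeasure ν]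
    (hνV : Integrable V ν) (hνη : 0 < ∫ x, η x ∂ν)
    {θ0 CQ α : ℝ} (hθ0 : 0 < θ0) (hθ01 : θ0 ≤ 1) (hCQ : 0 ≤ CQ)
    (hα0 : 0 < α) (hα1 : α < 1)
    (hconv : ∀ f : X → ℝ, Measurable f → (∀ x, |f x| ≤ V x) →
      ∀ k : ℕ, ∀ x : X,
        |(θ0 ^ (k * t))⁻¹ * (∫ y, f y ∂(iterK κ k x)) - η x * ∫ y, f y ∂ν|
          ≤ CQ * α ^ k * V x)
    :
    (∃ ρ : ℝ, 0 < ρ ∧ Measure.bind ν (fun x => iterK κ 1 x) = ENNReal.ofReal ρ • ν) ∧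
      ∀ μ : Measure X, IsProbabilityMeasure μ →
        ∀ ρ : ℝ, 0 < ρ →
          Measure.bind μ (fun x => iterK κ 1 x) = ENNReal.ofReal ρ • μ →
          0 < ∫ x, η x ∂μ → Integrable V μ → μ = ν :=
  stmt17_general κ t V η hV1 hη0 hηne hbdd ν hθ0 hCQ hα0 hα1 hconv
end
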